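/- arXiv:1610.08035 — 3 statements merged into one kernel-verified Lean document; each statement's English description precedes it below -/
import Mathlib

section
/- Theorem 1 (block-tridiagonality of the precision matrix): Let N, b be natural numbers, M_1, …, M_N be b×b real matrices, and let P_0, Q_1, …, Q_N be invertible b×b real matrices. Let 𝐀 be the (N+1)×(N+1) block lower-triangular matrix with 𝐀_{ii} = I, 𝐀_{ij} = M_i M_{i−1} ⋯ M_{j+1} for i > j, 𝐀_{ij} = 0 for i < j, and let 𝐐 be the block-diagonal matrix with diagonal blocks P_0, Q_1, …, Q_N. Then 𝒦 = 𝐀 𝐐 𝐀ᵀ is invertible and its inverse is block-tridiagonal: for all block indices i, j ∈ {0,…,N} with |i − j| ≥ 2, the (i,j) block of 𝒦⁻¹ is the zero b×b matrix. -/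
open Matrix

noncomputable section

/-- The ordered product `M i * M (i-1) * ⋯ * M (j+1)` (the identity when `i ≤ j`). -/
def chainProd {b : ℕ} (M : ℕ → Matrix (Fin b) (Fin b) ℝ) (i j : ℕ) :
    Matrix (Fin b) (Fin b) ℝ :=
  ((List.range (i - j)).map fun k => M (i - k)).prod

/-- Assemble an `(N+1) × (N+1)` array of `b × b` blocks into one big matrix. -/
def blockToMatrix (N b : ℕ)
    (blk : Fin (N + 1) → Fin (N + 1) → Matrix (Fin b) (Fin b) ℝ) :
    Matrix (Fin (N + 1) × Fin b) (Fin (N + 1) × Fin b) ℝ :=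
  fun p q => blk p.1 q.1 p.2 q.2

/-- The block lower-triangular matrix `𝐀`. -/
def Abig (N b : ℕ) (M : ℕ → Matrix (Fin b) (Fin b) ℝ) :
    Matrix (Fin (N + 1) × Fin b) (Fin (N + 1) × Fin b) ℝ :=
  blockToMatrix N b fun i j =>
    if (i : ℕ) < (j : ℕ) then 0 else chainProd M i j

/-- The block-diagonal matrix with diagonal blocks `D 0, D 1, …, D N`. -/
def blockDiag (N b : ℕ) (D : Fin (N + 1) → Matrix (Fin b) (Fin b) ℝ) :
    Matrix (Fin (N + 1) × Fin b) (Fin (N + 1) × Fin b) ℝ :=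
  blockToMatrix N b fun i j => if i = j then D i else 0

/-!
Since `𝐀ᵢⱼ = Mᵢ 𝐀ᵢ₋₁,ⱼ + δᵢⱼ`, the inverse of `𝐀` is `I - S`, where `S` carries `Mᵢ` at block
position `(i, i - 1)`. Hence `𝒦⁻¹ = (I - S)ᵀ 𝐐⁻¹ (I - S)` is a product of matrices with block
bandwidths `(0, 1)`, `(0, 0)` and `(1, 0)`, so it has block bandwidth `(1, 1)`. Block matrices are
treated as matrices over the ring of `b × b` matrices through `Matrix.comp`.
-/

namespace Matrix

variable {R : Type*} {l m n : ℕ}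

def IsBanded [Zero R] (X : Matrix (Fin m) (Fin n) R) (lo hi : ℕ) : Prop :=
  ∀ (i : Fin m) (j : Fin n), ((j : ℕ) + lo < i ∨ (i : ℕ) + hi < j) → X i j = 0

theorem IsBanded.mul [NonUnitalNonAssocSemiring R] {X : Matrix (Fin l) (Fin m) R}
    {Y : Matrix (Fin m) (Fin n) R} {lo₁ hi₁ lo₂ hi₂ : ℕ} (hX : X.IsBanded lo₁ hi₁)
    (hY : Y.IsBanded lo₂ hi₂) : (X * Y).IsBanded (lo₁ + lo₂) (hi₁ + hi₂) := by
  intro i j hij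
  rw [mul_apply]
  refine Finset.sum_eq_zero fun p _ => ?_
  by_cases hp : (p : ℕ) + lo₁ < i ∨ (i : ℕ) + hi₁ < p
  · rw [hX i p hp, zero_mul]
  · rw [hY p j (by omega), mul_zero]

theorem IsBanded.transpose [Zero R] {X : Matrix (Fin m) (Fin n) R} {lo hi : ℕ}
    (hX : X.IsBanded lo hi) : Xᵀ.IsBanded hi lo :=
  fun i j hij => hX j i hij.symm

theorem IsBanded.map [Zero R] {S : Type*} [Zero S] {X : Matrix (Fin m) (Fin n) R} {lo hi : ℕ}
    (hX : X.IsBanded lo hi) (f : R → S) (hf : f 0 = 0) : (X.map f).IsBanded lo hi :=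
  fun i j hij => by rw [map_apply, hX i j hij, hf]

theorem isBanded_diagonal [Zero R] (d : Fin n → R) : (diagonal d).IsBanded 0 0 :=
  fun _ _ hij => diagonal_apply_ne _ (Fin.ne_of_val_ne (by omega))

def subdiagonal [Zero R] (d : ℕ → R) : Matrix (Fin n) (Fin n) R :=
  of fun i j => if (i : ℕ) = j + 1 then d i else 0

theorem subdiagonal_mul_apply_zero [NonUnitalNonAssocSemiring R] (d : ℕ → R)
    (X : Matrix (Fin (n + 1)) (Fin m) R) (j : Fin m) :
    ((subdiagonal d : Matrix (Fin (n + 1)) (Fin (n + 1)) R) * X) 0 j = 0 := by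
  simp [mul_apply, subdiagonal]

theorem subdiagonal_mul_apply_succ [NonUnitalNonAssocSemiring R] (d : ℕ → R)
    (X : Matrix (Fin (n + 1)) (Fin m) R) (i : Fin n) (j : Fin m) :
    ((subdiagonal d : Matrix (Fin (n + 1)) (Fin (n + 1)) R) * X) i.succ j =
      d (i + 1) * X i.castSucc j := by
  rw [mul_apply, Fintype.sum_eq_single i.castSucc]
  · simp [subdiagonal]
  · intro p hp
    have : (i : ℕ) ≠ p := fun h => hp (Fin.ext h.symm)
    simp [subdiagonal, this]

theorem isBanded_one_sub_subdiagonal [Ring R] (d : ℕ → R) :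
    (1 - subdiagonal d : Matrix (Fin n) (Fin n) R).IsBanded 1 0 := by
  intro i j hij
  have hne : i ≠ j := Fin.ne_of_val_ne (by omega)
  have hsub : (i : ℕ) ≠ j + 1 := by omega
  simp [subdiagonal, one_apply_ne hne, hsub]

end Matrix

theorem chainProd_succ_left {b : ℕ} (M : ℕ → Matrix (Fin b) (Fin b) ℝ) {i j : ℕ} (h : j ≤ i) :
    chainProd M (i + 1) j = M (i + 1) * chainProd M i j := by
  unfold chainProd
  rw [show i + 1 - j = i - j + 1 by omega, List.range_succ_eq_map]
  simp only [List.map_cons, List.map_map, List.prod_cons, Nat.sub_zero]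
  congr 3
  funext k
  simp only [Function.comp_apply]
  congr 1
  omega

def stateTransitionBlocks (N b : ℕ) (M : ℕ → Matrix (Fin b) (Fin b) ℝ) :
    Matrix (Fin (N + 1)) (Fin (N + 1)) (Matrix (Fin b) (Fin b) ℝ) :=
  of fun i j => if (i : ℕ) < j then 0 else chainProd M i j

theorem Abig_eq_comp (N b : ℕ) (M : ℕ → Matrix (Fin b) (Fin b) ℝ) :
    Abig N b M = comp _ _ _ _ ℝ (stateTransitionBlocks N b M) :=
  rfl

theorem blockDiag_eq_comp (N b : ℕ) (D : Fin (N + 1) → Matrix (Fin b) (Fin b) ℝ) :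
    blockDiag N b D = comp _ _ _ _ ℝ (diagonal D) :=
  rfl

theorem one_sub_subdiagonal_mul_stateTransitionBlocks (N b : ℕ)
    (M : ℕ → Matrix (Fin b) (Fin b) ℝ) :
    (1 - subdiagonal M) * stateTransitionBlocks N b M = 1 := by
  ext i j : 1
  rw [sub_mul, one_mul, Matrix.sub_apply]
  cases i using Fin.cases with
  | zero =>
    rw [subdiagonal_mul_apply_zero, sub_zero]
    rcases eq_or_ne j 0 with rfl | hj
    · simp [stateTransitionBlocks, chainProd]
    · simp [stateTransitionBlocks, hj, one_apply_ne hj.symm]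
  | succ i =>
    rw [subdiagonal_mul_apply_succ]
    rcases lt_trichotomy ((i : ℕ) + 1) j with hij | hij | hij
    · have hne : i.succ ≠ j := Fin.ne_of_val_ne (by simp; omega)
      have hlt : i.succ < j := Fin.lt_def.mpr (by simpa using hij)
      simp [stateTransitionBlocks, one_apply_ne hne, hlt, Fin.castSucc_lt_succ.trans hlt]
    · obtain rfl : i.succ = j := Fin.ext (by simpa using hij)
      simp [stateTransitionBlocks, chainProd]
    · have hne : i.succ ≠ j := Fin.ne_of_val_ne (by simp; omega)
      have hle : j ≤ i.castSucc := Fin.le_def.mpr (by simp; omega)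
      simp [stateTransitionBlocks, one_apply_ne hne, hle.not_gt,
        (hle.trans Fin.castSucc_lt_succ.le).not_gt, chainProd_succ_left M (by omega : (j : ℕ) ≤ i)]

theorem comp_one_sub_subdiagonal_mul_Abig (N b : ℕ) (M : ℕ → Matrix (Fin b) (Fin b) ℝ) :
    compRingEquiv _ _ ℝ (1 - subdiagonal M) * Abig N b M = 1 := by
  rw [Abig_eq_comp, ← compRingEquiv_apply, ← map_mul,
    one_sub_subdiagonal_mul_stateTransitionBlocks, map_one]

theorem comp_diagonal_inv_mul_blockDiag (N b : ℕ) (Q : Fin (N + 1) → Matrix (Fin b) (Fin b) ℝ)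
    (hQ : ∀ i, IsUnit (Q i).det) :
    compRingEquiv _ _ ℝ (diagonal fun i => (Q i)⁻¹) * blockDiag N b Q = 1 := by
  rw [blockDiag_eq_comp, ← compRingEquiv_apply, ← map_mul, diagonal_mul_diagonal,
    ← map_one (compRingEquiv _ _ ℝ), ← diagonal_one]
  congr 2
  funext i
  exact nonsing_inv_mul _ (hQ i)

/-- Theorem 1 of the paper: `𝒦 = 𝐀 𝐐 𝐀ᵀ` is invertible and its inverse is
block-tridiagonal: every `(i,j)` block with `|i - j| ≥ 2` vanishes. -/
theorem SpInGP_inverse_blockTridiagonal (N b : ℕ)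
    (M : ℕ → Matrix (Fin b) (Fin b) ℝ)
    (Q : Fin (N + 1) → Matrix (Fin b) (Fin b) ℝ)
    (hQ : ∀ i, IsUnit (Q i).det) :
    IsUnit (Abig N b M * blockDiag N b Q * (Abig N b M)ᵀ) ∧
      ∀ i j : Fin (N + 1), ((i : ℕ) + 2 ≤ (j : ℕ) ∨ (j : ℕ) + 2 ≤ (i : ℕ)) →
        ∀ k l : Fin b,
          (Abig N b M * blockDiag N b Q * (Abig N b M)ᵀ)⁻¹ (i, k) (j, l) = 0 := by
  set L : Matrix (Fin (N + 1)) (Fin (N + 1)) (Matrix (Fin b) (Fin b) ℝ) := 1 - subdiagonal M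
  set Dinv := diagonal fun i => (Q i)⁻¹
  have hA := comp_one_sub_subdiagonal_mul_Abig N b M
  have hD := comp_diagonal_inv_mul_blockDiag N b Q hQ
  have hAunit := (isUnit_iff_isUnit_det _).mpr (isUnit_det_of_left_inverse hA)
  have hDunit := (isUnit_iff_isUnit_det _).mpr (isUnit_det_of_left_inverse hD)
  refine ⟨(hAunit.mul hDunit).mul ((isUnit_transpose _).mpr hAunit), fun i j hij k l => ?_⟩
  have hK : (Abig N b M * blockDiag N b Q * (Abig N b M)ᵀ)⁻¹ =
      compRingEquiv _ _ ℝ (Lᵀ.map transpose * (Dinv * L)) := by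
    rw [Matrix.mul_inv_rev, Matrix.mul_inv_rev, ← transpose_nonsing_inv, inv_eq_left_inv hA,
      inv_eq_left_inv hD, map_mul, map_mul]
    rfl
  have hband : (Lᵀ.map transpose * (Dinv * L)).IsBanded (0 + (0 + 1)) (1 + (0 + 0)) :=
    ((isBanded_one_sub_subdiagonal M).transpose.map _ transpose_zero).mul
      ((isBanded_diagonal _).mul (isBanded_one_sub_subdiagonal M))
  rw [hK, compRingEquiv_apply, comp_apply, hband i j (by omega)]
  rfl
end
end

section
/- Correctness of the Matérn(3/2) state-space representation: Let ℓ > 0, φ = √3/ℓ, F the 2×2 real matrix with rows (0, 1) and (−φ², −2φ), and P₀ the 2×2 diagonal matrix with diagonal entries 1 and 3/ℓ². Then for every t ≥ 0, the (0,0) entry of exp(tF) · P₀ equals (1 + φt) e^{−φt}; equivalently, with H = [1, 0], H exp(tF) P₀ Hᵀ equals the Matérn(ν = 3/2) covariance k(t) = (1 + √3 t/ℓ) exp(−√3 t/ℓ). -/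
/-!
The drift matrix `F` is critically damped: `N = F + φ I` satisfies `N² = 0`, i.e. `-φ` is a
double eigenvalue of `F`. Since `-φ I` commutes with `N`, `exp (t F) = e^{-φt} (I + t N)`, and
as `P₀` is diagonal with `(P₀)₀₀ = 1`, the `(0,0)` entry of `exp (t F) P₀` is `e^{-φt} (1 + φ t)`.
-/

open Matrix NormedSpace

theorem NormedSpace.exp_eq_one_add_of_sq_eq_zero {𝔸 : Type*} [Ring 𝔸] [Algebra ℚ 𝔸]
    [TopologicalSpace 𝔸] [IsTopologicalRing 𝔸] {x : 𝔸} (hx : x ^ 2 = 0) :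
    exp x = 1 + x := by
  have hvanish : ∀ n ∉ Finset.range 2, ((n.factorial : ℚ)⁻¹) • x ^ n = 0 := fun n hn => by
    rw [pow_eq_zero_of_le (by simp at hn; omega) hx, smul_zero]
  rw [exp_eq_tsum_rat]
  beta_reduce
  rw [tsum_eq_sum hvanish]
  simp [Finset.sum_range_succ]

namespace Matrix

variable {m : Type*} [Fintype m] [DecidableEq m]

theorem exp_smul_one (c : ℝ) : exp (c • (1 : Matrix m m ℝ)) = Real.exp c • 1 := by
  rw [smul_one_eq_diagonal, smul_one_eq_diagonal, exp_diagonal, Pi.exp_def, Real.exp_eq_exp_ℝ]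

theorem exp_smul_of_sq_sub_smul_one_eq_zero {A : Matrix m m ℝ} {μ : ℝ}
    (hA : (A - μ • 1) ^ 2 = 0) (t : ℝ) :
    exp (t • A) = Real.exp (μ * t) • (1 + t • (A - μ • 1)) := by
  have hsplit : t • A = (μ * t) • (1 : Matrix m m ℝ) + t • (A - μ • 1) := by
    rw [smul_sub, smul_smul, mul_comm]
    abel
  have hcomm : Commute ((μ * t) • (1 : Matrix m m ℝ)) (t • (A - μ • 1)) :=
    ((Commute.one_left _).smul_left _).smul_right _
  rw [hsplit, exp_add_of_commute _ _ hcomm, exp_smul_one,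
    exp_eq_one_add_of_sq_eq_zero (by rw [smul_pow, hA, smul_zero]), smul_one_mul]

end Matrix

theorem matern32_drift_sub_smul_one_sq_eq_zero (φ : ℝ) :
    (!![(0 : ℝ), 1; -φ ^ 2, -(2 * φ)] - (-φ) • 1) ^ 2 = 0 := by
  rw [one_fin_two, sq]
  ext i j
  fin_cases i <;> fin_cases j <;>
    simp only [Matrix.mul_apply, Fin.sum_univ_two, Matrix.sub_apply, Matrix.smul_apply, of_apply,
      cons_val', cons_val_zero, cons_val_one, Fin.zero_eta, Fin.mk_one, cons_val_fin_one,
      Matrix.zero_apply, smul_eq_mul] <;> ring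

theorem matern32_exp_smul_drift (φ t : ℝ) :
    exp (t • !![(0 : ℝ), 1; -φ ^ 2, -(2 * φ)]) =
      Real.exp (-(φ * t)) • !![1 + φ * t, t; -(φ ^ 2 * t), 1 - φ * t] := by
  rw [exp_smul_of_sq_sub_smul_one_eq_zero (matern32_drift_sub_smul_one_sq_eq_zero φ), neg_mul,
    one_fin_two]
  congr 1
  ext i j
  fin_cases i <;> fin_cases j <;>
    simp only [Matrix.add_apply, Matrix.sub_apply, Matrix.smul_apply, of_apply, cons_val',
      cons_val_zero, cons_val_one, Fin.zero_eta, Fin.mk_one, cons_val_fin_one, smul_eq_mul] <;> ring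

theorem matern32_state_space_correct_general (ℓ φ : ℝ)
    (hφ : φ = Real.sqrt 3 / ℓ) (t : ℝ) :
    (NormedSpace.exp (t • !![(0 : ℝ), 1; -φ ^ 2, -(2 * φ)]) *
        !![(1 : ℝ), 0; 0, 3 / ℓ ^ 2]) 0 0 =
      (1 + φ * t) * Real.exp (-(φ * t)) ∧
    (!![(1 : ℝ), 0] *
        NormedSpace.exp (t • !![(0 : ℝ), 1; -φ ^ 2, -(2 * φ)]) *
        !![(1 : ℝ), 0; 0, 3 / ℓ ^ 2] * (!![(1 : ℝ), 0])ᵀ) 0 0 =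
      (1 + Real.sqrt 3 * t / ℓ) * Real.exp (-(Real.sqrt 3 * t / ℓ)) := by
  have hφt : Real.sqrt 3 * t / ℓ = φ * t := by
    rw [hφ]
    ring
  rw [matern32_exp_smul_drift, hφt]
  constructor <;>
    simp only [Matrix.mul_apply, Fin.sum_univ_two, transpose_apply, Matrix.smul_apply, of_apply,
      cons_val', cons_val_zero, cons_val_one, cons_val_fin_one, smul_eq_mul] <;> ring

/-- Correctness of the Matérn(3/2) state-space representation: with `φ = √3/ℓ`,
drift matrix `F = !![0, 1; −φ², −2φ]`, stationary covariance
`P₀ = !![1, 0; 0, 3/ℓ²]` and measurement matrix `H = !![1, 0]`, for every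
`t ≥ 0` the `(0,0)` entry of `exp(tF) · P₀` equals `(1 + φt) e^{−φt}`;
equivalently `H exp(tF) P₀ Hᵀ = (1 + √3 t/ℓ) exp(−√3 t/ℓ)`. -/
theorem matern32_state_space_correct (ℓ φ : ℝ) (hℓ : 0 < ℓ)
    (hφ : φ = Real.sqrt 3 / ℓ) (t : ℝ) (ht : 0 ≤ t) :
    (NormedSpace.exp (t • !![(0 : ℝ), 1; -φ ^ 2, -(2 * φ)]) *
        !![(1 : ℝ), 0; 0, 3 / ℓ ^ 2]) 0 0 =
      (1 + φ * t) * Real.exp (-(φ * t)) ∧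
    (!![(1 : ℝ), 0] *
        NormedSpace.exp (t • !![(0 : ℝ), 1; -φ ^ 2, -(2 * φ)]) *
        !![(1 : ℝ), 0; 0, 3 / ℓ ^ 2] * (!![(1 : ℝ), 0])ᵀ) 0 0 =
      (1 + Real.sqrt 3 * t / ℓ) * Real.exp (-(Real.sqrt 3 * t / ℓ)) :=
  matern32_state_space_correct_general ℓ φ hφ t
end

section
/- Positive semidefiniteness of the Matérn(3/2) process-noise covariance: Let ℓ > 0, φ = √3/ℓ, F the 2×2 real matrix with rows (0, 1) and (−φ², −2φ), and P₀ the 2×2 diagonal matrix with diagonal entries 1 and 3/ℓ². Then for every t ≥ 0, the matrix Q(t) = P₀ − exp(tF) · P₀ · exp(tF)ᵀ is symmetric positive semidefinite. -/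
/-!
Write `E(u) = exp(u F)`. Since `E' = E F = F E`, the derivative of `u ↦ E(u) P E(u)ᵀ` is
`E(u) (F P + P Fᵀ) E(u)ᵀ`; so when the Lyapunov matrix `F P + P Fᵀ` is negative semidefinite,
`E(u) P E(u)ᵀ` decreases in the Loewner order and `P - E(t) P E(t)ᵀ ⪰ 0` for `t ≥ 0`.
For the Matérn(3/2) model `P₀ = diag(1, φ²)` and `F P₀ + P₀ Fᵀ = diag(0, -4φ³)`.
-/

open Matrix

namespace Matrix

variable {n : Type*} [Fintype n] [DecidableEq n]

theorem hasDerivAt_dotProduct_exp_smul_mul_mul_transpose_exp_mulVec (F P : Matrix n n ℝ)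
    (x : n → ℝ) (s : ℝ) :
    HasDerivAt (fun u : ℝ => x ⬝ᵥ (NormedSpace.exp (u • F) * P * (NormedSpace.exp (u • F))ᵀ) *ᵥ x)
      (x ⬝ᵥ (NormedSpace.exp (s • F) * (F * P + P * Fᵀ) * (NormedSpace.exp (s • F))ᵀ) *ᵥ x) s := by
  -- any norm would do: it is only needed to differentiate `exp`
  let := Matrix.linftyOpNormedRing (n := n) (α := ℝ)
  let := Matrix.linftyOpNormedAlgebra (n := n) (R := ℝ) (α := ℝ)
  let q : Matrix n n ℝ →L[ℝ] ℝ := LinearMap.toContinuousLinearMap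
    { toFun := fun M => x ⬝ᵥ M *ᵥ x
      map_add' := fun M N => by simp only [add_mulVec, dotProduct_add]
      map_smul' := fun c M => by simp only [smul_mulVec, dotProduct_smul, RingHom.id_apply] }
  have hE : HasDerivAt (fun u : ℝ => NormedSpace.exp (u • F) * P * NormedSpace.exp (u • Fᵀ))
      (NormedSpace.exp (s • F) * (F * P + P * Fᵀ) * NormedSpace.exp (s • Fᵀ)) s := by
    refine (((hasDerivAt_exp_smul_const F s).mul_const P).mul
      (hasDerivAt_exp_smul_const' Fᵀ s)).congr_deriv ?_
    noncomm_ring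
  simp only [← exp_transpose, transpose_smul]
  exact q.hasFDerivAt.comp_hasDerivAt s hE

theorem antitone_dotProduct_exp_smul_mul_mul_transpose_exp_mulVec {F P : Matrix n n ℝ}
    (hFP : (-(F * P + P * Fᵀ)).PosSemidef) (x : n → ℝ) :
    Antitone fun u : ℝ =>
      x ⬝ᵥ (NormedSpace.exp (u • F) * P * (NormedSpace.exp (u • F))ᵀ) *ᵥ x := by
  refine antitone_of_hasDerivAt_nonpos
    (hasDerivAt_dotProduct_exp_smul_mul_mul_transpose_exp_mulVec F P x) fun u => ?_
  have := (hFP.mul_mul_conjTranspose_same (NormedSpace.exp (u • F))).dotProduct_mulVec_nonneg x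
  rw [Pi.zero_apply]
  simpa only [conjTranspose_eq_transpose_of_trivial, star_trivial, Matrix.mul_neg, Matrix.neg_mul,
    neg_mulVec, dotProduct_neg, neg_nonneg] using this

theorem posSemidef_sub_exp_smul_mul_mul_transpose_exp {F P : Matrix n n ℝ} (hP : P.IsHermitian)
    (hFP : (-(F * P + P * Fᵀ)).PosSemidef) {t : ℝ} (ht : 0 ≤ t) :
    (P - NormedSpace.exp (t • F) * P * (NormedSpace.exp (t • F))ᵀ).PosSemidef := by
  refine .of_dotProduct_mulVec_nonneg ?_ fun x => ?_
  · simpa only [conjTranspose_eq_transpose_of_trivial] using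
      hP.sub (isHermitian_mul_mul_conjTranspose (NormedSpace.exp (t • F)) hP)
  · have := antitone_dotProduct_exp_smul_mul_mul_transpose_exp_mulVec hFP x ht
    simp only [zero_smul, NormedSpace.exp_zero, one_mul, transpose_one, mul_one] at this
    rw [star_trivial, sub_mulVec, dotProduct_sub]
    exact sub_nonneg.2 this

end Matrix

theorem matern32_neg_lyapunov_posSemidef {φ : ℝ} (hφ : 0 ≤ φ) :
    (-(!![0, 1; -φ ^ 2, -(2 * φ)] * diagonal ![1, φ ^ 2] +
      diagonal ![1, φ ^ 2] * (!![0, 1; -φ ^ 2, -(2 * φ)])ᵀ)).PosSemidef := by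
  have h : -(!![0, 1; -φ ^ 2, -(2 * φ)] * diagonal ![1, φ ^ 2] +
      diagonal ![1, φ ^ 2] * (!![0, 1; -φ ^ 2, -(2 * φ)])ᵀ) = diagonal ![0, 4 * φ ^ 3] := by
    ext i j
    fin_cases i <;> fin_cases j <;> norm_num [vecMul_diagonal]; ring
  rw [h]
  refine .diagonal fun i => ?_
  fin_cases i <;> simp [hφ]

/-- Positive semidefiniteness of the Matérn(3/2) process-noise covariance:
with `φ = √3/ℓ`, drift matrix `F = !![0, 1; −φ², −2φ]` and stationary
covariance `P₀ = !![1, 0; 0, 3/ℓ²]`, for every `t ≥ 0` the matrix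
`Q(t) = P₀ − exp(tF) P₀ exp(tF)ᵀ` is symmetric positive semidefinite. -/
theorem matern32_process_noise_posSemidef (ℓ φ : ℝ) (hℓ : 0 < ℓ)
    (hφ : φ = Real.sqrt 3 / ℓ) (t : ℝ) (ht : 0 ≤ t) :
    (!![(1 : ℝ), 0; 0, 3 / ℓ ^ 2] -
        NormedSpace.exp (t • !![(0 : ℝ), 1; -φ ^ 2, -(2 * φ)]) *
          !![(1 : ℝ), 0; 0, 3 / ℓ ^ 2] *
          (NormedSpace.exp (t • !![(0 : ℝ), 1; -φ ^ 2, -(2 * φ)]))ᵀ).PosSemidef := by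
  have hφ₀ : 0 ≤ φ := hφ ▸ by positivity
  have hP : !![(1 : ℝ), 0; 0, 3 / ℓ ^ 2] = diagonal ![1, φ ^ 2] := by
    rw [hφ, div_pow, Real.sq_sqrt zero_le_three, diagonal_fin_two]
    rfl
  rw [hP]
  exact posSemidef_sub_exp_smul_mul_mul_transpose_exp (isHermitian_diagonal _)
    (matern32_neg_lyapunov_posSemidef hφ₀) ht
end
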